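/- arXiv:2204.00373 — 8 statements merged into one kernel-verified Lean document; each statement's English description precedes it below -/
import Mathlib

section
/- Let (X,d) be a metric space and let (ψ_θ)_{θ∈Θ} be a family of self-maps of X indexed by a nonempty set Θ such that every ψ_θ is Lipschitz, α := sup_{θ∈Θ} Lip(ψ_θ) < 1, and the family is bounded (for every bounded set A ⊆ X the union ∪_{θ∈Θ} ψ_θ(A) is bounded). Then the fractal operator F, defined by F(A) = closure(∪_{θ∈Θ} ψ_θ(A)), maps nonempty bounded closed subsets of X to nonempty bounded closed subsets of X, and for all nonempty bounded closed sets A, B ⊆ X one has h(F(A), F(B)) ≤ α · h(A,B), where h is the Hausdorff-Pompeiu distance. -/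
open Metric Bornology Filter EMetric

lemma lip_infEdist {X : Type*} [MetricSpace X] {α : NNReal} {f : X → X}
    (hf : LipschitzWith α f) (a : X) {B : Set X} (hB : B.Nonempty) :
    infEdist (f a) (f '' B) ≤ (α : ENNReal) * infEdist a B := by
  unfold infEdist
  rw [infEDist, infEDist, iInf_image, iInf_subtype', iInf_subtype',
    ENNReal.mul_iInf' (by simp) (fun _ => hB.to_subtype)]
  exact iInf_mono fun b => hf a b

/-- The fractal operator `F(A) = closure (⋃ θ, ψ θ '' A)` of a bounded family of
contractions with `sup Lip (ψ θ) ≤ α < 1` maps nonempty bounded closed sets to nonempty bounded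
closed sets, and is an `α`-contraction for the Hausdorff-Pompeiu distance. -/
theorem stmt0 {X : Type*} [MetricSpace X] {Θ : Type*} [Nonempty Θ]
    (ψ : Θ → X → X) (α : NNReal) (hα : α < 1)
    (hLip : ∀ θ, LipschitzWith α (ψ θ))
    (hbdd : ∀ A : Set X, IsBounded A → IsBounded (⋃ θ, ψ θ '' A)) :
    (∀ A : Set X, A.Nonempty → IsBounded A → IsClosed A →
      (closure (⋃ θ, ψ θ '' A)).Nonempty ∧ IsBounded (closure (⋃ θ, ψ θ '' A)) ∧
        IsClosed (closure (⋃ θ, ψ θ '' A))) ∧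
    (∀ A B : Set X, A.Nonempty → IsBounded A → IsClosed A →
      B.Nonempty → IsBounded B → IsClosed B →
      hausdorffDist (closure (⋃ θ, ψ θ '' A)) (closure (⋃ θ, ψ θ '' B)) ≤
        (α : ℝ) * hausdorffDist A B) := by
  constructor
  · intro A hA hAb _
    refine ⟨?_, (hbdd A hAb).closure, isClosed_closure⟩
    obtain ⟨θ⟩ := ‹Nonempty Θ›
    exact ((hA.image (ψ θ)).mono (Set.subset_iUnion (fun θ => ψ θ '' A) θ)).mono
      subset_closure
  · intro A B hA hAb _ hB hBb _
    have hfin : hausdorffEdist A B ≠ ⊤ :=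
      hausdorffEdist_ne_top_of_nonempty_of_bounded hA hB hAb hBb
    have key : ∀ C D : Set X, C.Nonempty → D.Nonempty →
        ∀ x ∈ ⋃ θ, ψ θ '' C, infEdist x (⋃ θ, ψ θ '' D) ≤
          (α : ENNReal) * hausdorffEdist C D := by
      intro C D _ hD x hx
      obtain ⟨θ, a, ha, rfl⟩ := by simpa using hx
      calc infEdist (ψ θ a) (⋃ θ', ψ θ' '' D)
          ≤ infEdist (ψ θ a) (ψ θ '' D) :=
            infEdist_anti (Set.subset_iUnion (fun θ' => ψ θ' '' D) θ)
        _ ≤ (α : ENNReal) * infEdist a D := lip_infEdist (hLip θ) a hD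
        _ ≤ (α : ENNReal) * hausdorffEdist C D :=
            mul_le_mul_right (infEdist_le_hausdorffEdist_of_mem ha) _
    have hE : hausdorffEdist (⋃ θ, ψ θ '' A) (⋃ θ, ψ θ '' B) ≤
        (α : ENNReal) * hausdorffEdist A B := by
      refine hausdorffEdist_le_of_infEdist (key A B hA hB) ?_
      intro x hx
      calc infEdist x (⋃ θ, ψ θ '' A) ≤ (α : ENNReal) * hausdorffEdist B A :=
            key B A hB hA x hx
        _ = (α : ENNReal) * hausdorffEdist A B := by unfold hausdorffEdist; rw [hausdorffEdist_comm]
    rw [hausdorffDist_closure, hausdorffDist, hausdorffDist]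
    calc (hausdorffEdist (⋃ θ, ψ θ '' A) (⋃ θ, ψ θ '' B)).toReal
        ≤ ((α : ENNReal) * hausdorffEdist A B).toReal :=
          ENNReal.toReal_mono (by finiteness) hE
      _ = (α : ℝ) * (hausdorffEdist A B).toReal := by
          rw [ENNReal.toReal_mul, ENNReal.coe_toReal]
end

section
/- Let (X,d) be a complete metric space, m ≥ 2, n ≥ 1, and let φ_1, …, φ_n : X^m → X each be Lipschitz with constant strictly less than 1 with respect to the max metric on X^m. Let A_S be the attractor of this GIFS, i.e. the unique nonempty compact set with ∪_{j=1}^n φ_j(A_S × ⋯ × A_S) = A_S. Then, taking B = A_S, the set A_S is the unique attractor of the IIFS induced by B: closure(∪_{θ∈Θ} ψ_θ(A_S)) = A_S, where Θ = A_S^{m−1} × {1,…,n} and ψ_{(b,j)}(x) = φ_j(x, b₂, …, b_m). -/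
open Metric Bornology Filter EMetric

/-- If `A_S` is the attractor of a GIFS of order `m = k + 1 ≥ 2` consisting of
Lipschitz contractions, then `A_S` is the unique attractor of the IIFS induced by `B = A_S`:
it satisfies `closure (⋃ θ, ψ θ '' A_S) = A_S` and any nonempty bounded closed set fixed by the
induced fractal operator equals `A_S`.  `X^m` is modelled as `X × (Fin k → X)` with the max
metric. -/
theorem stmt7 {X : Type*} [MetricSpace X] [CompleteSpace X]
    (k n : ℕ) (hk : 1 ≤ k) (hn : 1 ≤ n)
    (φ : Fin n → X × (Fin k → X) → X)
    (hφ : ∀ j, ∃ L : NNReal, L < 1 ∧ LipschitzWith L (φ j))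
    (AS : Set X) (hASne : AS.Nonempty) (hAScp : IsCompact AS)
    (hASfix : (⋃ j, φ j '' (AS ×ˢ Set.univ.pi (fun _ : Fin k => AS))) = AS) :
    closure (⋃ j, φ j '' (AS ×ˢ Set.univ.pi (fun _ : Fin k => AS))) = AS ∧
    ∀ A' : Set X, A'.Nonempty → IsBounded A' → IsClosed A' →
      closure (⋃ j, φ j '' (A' ×ˢ Set.univ.pi (fun _ : Fin k => AS))) = A' → A' = AS := by
  choose L hL1 hLip using hφ
  haveI : Nonempty (Fin n) := ⟨⟨0, hn⟩⟩
  set P : Set (Fin k → X) := Set.univ.pi (fun _ : Fin k => AS) with hP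
  set r : NNReal := Finset.univ.sup L with hr
  have hr1 : r < 1 := by
    rw [hr, Finset.sup_lt_iff (by norm_num : (⊥ : NNReal) < 1)]
    exact fun j _ => hL1 j
  have hrle1 : (r : ENNReal) ≤ 1 := by exact_mod_cast hr1.le
  constructor
  · rw [hASfix]; exact hAScp.isClosed.closure_eq
  · intro A' hA'ne hA'bd hA'cl hA'fix
    set D := hausdorffEdist A' AS with hD
    have hfin : D ≠ ⊤ :=
      hausdorffEdist_ne_top_of_nonempty_of_bounded hA'ne hASne hA'bd hAScp.isBounded
    -- key estimate, with ε slack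
    have key : ∀ (S T : Set X), hausdorffEdist S T ≤ D → ∀ ε : NNReal, 0 < ε →
        ∀ x ∈ ⋃ j, φ j '' (S ×ˢ P), infEdist x (⋃ j, φ j '' (T ×ˢ P)) ≤ r * D + ε := by
      intro S T hST ε hε x hx
      obtain ⟨j, a, p, ⟨haS, hpP⟩, rfl⟩ := by simpa using hx
      have h1 : infEdist a T < D + ε := by
        calc infEdist a T ≤ hausdorffEdist S T := infEdist_le_hausdorffEdist_of_mem haS
          _ ≤ D := hST
          _ < D + ε := ENNReal.lt_add_right hfin (by exact_mod_cast hε.ne')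
      obtain ⟨b, hbT, hab⟩ := infEdist_lt_iff.1 h1
      have hmem : φ j (b, p) ∈ ⋃ j', φ j' '' (T ×ˢ P) :=
        Set.mem_iUnion.2 ⟨j, Set.mem_image_of_mem _ ⟨hbT, hpP⟩⟩
      calc infEdist (φ j (a, p)) (⋃ j', φ j' '' (T ×ˢ P)) ≤ edist (φ j (a, p)) (φ j (b, p)) :=
            infEdist_le_edist_of_mem hmem
        _ ≤ L j * edist (a, p) (b, p) := hLip j _ _
        _ = L j * edist a b := by
            congr 1
            rw [Prod.edist_eq]
            simp
        _ ≤ r * (D + ε) := by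
            gcongr
            exact Finset.le_sup (Finset.mem_univ j)
        _ = r * D + r * ε := by ring
        _ ≤ r * D + ε := by
            gcongr
            calc (r : ENNReal) * ε ≤ 1 * ε := by gcongr
              _ = ε := one_mul _
    have hle : D ≤ r * D := by
      have hunion : D = hausdorffEdist (⋃ j, φ j '' (A' ×ˢ P)) (⋃ j, φ j '' (AS ×ˢ P)) := by
        conv_lhs => rw [hD, ← hA'fix, ← hAScp.isClosed.closure_eq]
        conv_lhs => rw [show closure AS = closure (⋃ j, φ j '' (AS ×ˢ P)) by
          rw [hASfix, hAScp.isClosed.closure_eq]]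
        exact hausdorffEdist_closure
      have hmulfin : (r : ENNReal) * D ≠ ⊤ := ENNReal.mul_ne_top ENNReal.coe_ne_top hfin
      refine ENNReal.le_of_forall_pos_le_add fun ε hε _ => ?_
      calc D = hausdorffEdist (⋃ j, φ j '' (A' ×ˢ P)) (⋃ j, φ j '' (AS ×ˢ P)) := hunion
        _ ≤ r * D + ε := hausdorffEdist_le_of_infEdist
            (key A' AS le_rfl ε hε)
            (key AS A' (le_of_eq hausdorffEdist_comm) ε hε)
    have hD0 : D = 0 := by
      by_contra h0
      have : D < D := by
        calc D ≤ r * D := hle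
          _ < 1 * D := by
              have := ENNReal.mul_lt_mul_right h0 hfin (show (r : ENNReal) < 1 by exact_mod_cast hr1)
              rwa [mul_comm D, mul_comm D] at this
          _ = D := one_mul _
      exact lt_irrefl _ this
    exact hausdorffEdist_zero_iff_eq_of_closed hA'cl hAScp.isClosed |>.1 hD0
end

section
/- Let (X,d) be a complete metric space, m ≥ 2, n ≥ 1, and let φ_1, …, φ_n : X^m → X each be Lipschitz with respect to the max metric on X^m, with L := max_j Lip(φ_j) < 1. Let B, B' ⊆ X be nonempty bounded closed sets and let A, A' ⊆ X be nonempty bounded closed sets satisfying A = closure(∪_{j=1}^n φ_j(A × B^{m−1})) and A' = closure(∪_{j=1}^n φ_j(A' × (B')^{m−1})) (i.e. A and A' are the attractors of the IIFS induced by B and B' respectively). Then h(A, A') ≤ L · h(B, B'), where h is the Hausdorff-Pompeiu distance. In other words, the evaluation map B ↦ A_{R_B} is a Lipschitz contraction with constant at most L. -/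
open Metric Bornology Filter EMetric
open scoped ENNReal NNReal

private lemma stmt8_key {X : Type*} [MetricSpace X]
    (k n : ℕ) (φ : Fin n → X × (Fin k → X) → X) (L : NNReal)
    (hφ : ∀ j, LipschitzWith L (φ j))
    (B B' A A' : Set X) {r : ℝ≥0∞}
    (hAA : hausdorffEdist A A' < r) (hBB : hausdorffEdist B B' < r) :
    ∀ x ∈ (⋃ j, φ j '' (A ×ˢ Set.univ.pi (fun _ : Fin k => B))),
      ∃ y ∈ (⋃ j, φ j '' (A' ×ˢ Set.univ.pi (fun _ : Fin k => B'))),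
        edist x y ≤ L * r := by
  rintro x hx
  simp only [Set.mem_iUnion, Set.mem_image] at hx
  obtain ⟨j, ⟨a, b⟩, ⟨haA, hbB⟩, rfl⟩ := hx
  obtain ⟨a', ha'A, haa'⟩ := exists_edist_lt_of_hausdorffEdist_lt haA hAA
  have hb : ∀ i : Fin k, ∃ y ∈ B', edist (b i) y < r := fun i =>
    exists_edist_lt_of_hausdorffEdist_lt (hbB i trivial) hBB
  choose b' hb'B hbb' using hb
  refine ⟨φ j (a', b'), ?_, ?_⟩
  · exact Set.mem_iUnion.2 ⟨j, Set.mem_image_of_mem _ ⟨ha'A, fun i _ => hb'B i⟩⟩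
  · calc edist (φ j (a, b)) (φ j (a', b')) ≤ L * edist (a, b) (a', b') := hφ j _ _
      _ ≤ L * r := by
          refine mul_le_mul_right ?_ _
          rw [Prod.edist_eq]
          refine max_le haa'.le ?_
          rw [edist_pi_def]
          exact Finset.sup_le fun i _ => (hbb' i).le

/-- The evaluation map `B ↦ A_{R_B}` (attractor of the IIFS induced by `B`) is a
Lipschitz contraction with constant at most `L = max_j Lip(φ_j) < 1`:
`h(A_{R_B}, A_{R_{B'}}) ≤ L · h(B, B')`.  `X^m` (with max metric, `m = k + 1 ≥ 2`) is modelled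
as `X × (Fin k → X)`. -/
theorem stmt8 {X : Type*} [MetricSpace X] [CompleteSpace X]
    (k n : ℕ) (hk : 1 ≤ k) (hn : 1 ≤ n)
    (φ : Fin n → X × (Fin k → X) → X) (L : NNReal) (hL : L < 1)
    (hφ : ∀ j, LipschitzWith L (φ j))
    (B B' A A' : Set X)
    (hBne : B.Nonempty) (hBbd : IsBounded B) (hBcl : IsClosed B)
    (hB'ne : B'.Nonempty) (hB'bd : IsBounded B') (hB'cl : IsClosed B')
    (hAne : A.Nonempty) (hAbd : IsBounded A) (hAcl : IsClosed A)
    (hA'ne : A'.Nonempty) (hA'bd : IsBounded A') (hA'cl : IsClosed A')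
    (hA : closure (⋃ j, φ j '' (A ×ˢ Set.univ.pi (fun _ : Fin k => B))) = A)
    (hA' : closure (⋃ j, φ j '' (A' ×ˢ Set.univ.pi (fun _ : Fin k => B'))) = A') :
    hausdorffDist A A' ≤ (L : ℝ) * hausdorffDist B B' := by
  set H := hausdorffEDist A A' with hH
  set HB := hausdorffEDist B B' with hHB
  have hHfin : H ≠ ⊤ := hausdorffEdist_ne_top_of_nonempty_of_bounded hAne hA'ne hAbd hA'bd
  have hHBfin : HB ≠ ⊤ := hausdorffEdist_ne_top_of_nonempty_of_bounded hBne hB'ne hBbd hB'bd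
  -- key estimate : H ≤ L * max H HB
  have key : H ≤ L * max H HB := by
    have Mfin : max H HB ≠ ⊤ := by simp [hHfin, hHBfin]
    refine ENNReal.le_of_forall_pos_le_add fun ε hε hlt => ?_
    set r : ℝ≥0∞ := max H HB + ε with hr
    have hAAr : H < r := lt_of_le_of_lt (le_max_left _ _)
      (ENNReal.lt_add_right Mfin (by simpa using hε.ne'))
    have hBBr : HB < r := lt_of_le_of_lt (le_max_right _ _)
      (ENNReal.lt_add_right Mfin (by simpa using hε.ne'))
    have h1 := stmt8_key k n φ L hφ B B' A A' hAAr hBBr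
    have h2 := stmt8_key k n φ L hφ B' B A' A
      (show hausdorffEDist A' A < r by rw [hausdorffEDist_comm]; exact hAAr)
      (show hausdorffEDist B' B < r by rw [hausdorffEDist_comm]; exact hBBr)
    have hUU : hausdorffEdist (⋃ j, φ j '' (A ×ˢ Set.univ.pi (fun _ : Fin k => B)))
        (⋃ j, φ j '' (A' ×ˢ Set.univ.pi (fun _ : Fin k => B'))) ≤ L * r :=
      hausdorffEdist_le_of_mem_edist h1 h2
    have : H ≤ L * r := by
      rw [hH, ← hA, ← hA', hausdorffEdist_closure]
      exact hUU
    calc H ≤ L * r := this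
      _ = L * max H HB + L * ε := by rw [hr, mul_add]
      _ ≤ L * max H HB + ε := by
          gcongr
          calc (L : ℝ≥0∞) * ε ≤ 1 * ε := by gcongr; exact_mod_cast hL.le
            _ = ε := one_mul _
  -- split on the max
  rcases le_or_gt H HB with hle | hlt
  · have : H ≤ L * HB := by rwa [max_eq_right hle] at key
    rw [hausdorffDist, hausdorffDist, ← hH, ← hHB]
    calc H.toReal ≤ ((L : ℝ≥0∞) * HB).toReal :=
          ENNReal.toReal_mono (by simp [ENNReal.mul_ne_top, hHBfin]) this
      _ = (L : ℝ) * HB.toReal := by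
          rw [ENNReal.toReal_mul]; simp
  · have hH0 : H = 0 := by
      by_contra h0
      have : H ≤ L * H := by rwa [max_eq_left hlt.le] at key
      have : H < H := lt_of_le_of_lt this (by
        calc (L : ℝ≥0∞) * H < 1 * H := by
              apply ENNReal.mul_lt_mul_iff_left h0 hHfin |>.2
              exact_mod_cast hL
          _ = H := one_mul _)
      exact absurd this (lt_irrefl _)
    have : hausdorffDist A A' = 0 := by
      rw [hausdorffDist, ← hH, hH0, ENNReal.toReal_zero]
    rw [this]
    exact mul_nonneg L.coe_nonneg hausdorffDist_nonneg
end

section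
/- Let (X,d) be a complete metric space, m ≥ 2, n ≥ 1, and let φ_1, …, φ_n : X^m → X each be Lipschitz with constant strictly less than 1 with respect to the max metric on X^m. Let A_S denote the attractor of this GIFS (the unique nonempty compact set with ∪_{j=1}^n φ_j(A_S × ⋯ × A_S) = A_S). For any nonempty bounded closed set B₀ ⊆ X, define inductively B_{k+1} to be the attractor of the IIFS induced by B_k, i.e. the unique nonempty bounded closed set A with closure(∪_{j=1}^n φ_j(A × B_k^{m−1})) = A. Then the sequence (B_k) converges to A_S in the Hausdorff-Pompeiu distance. -/
open Metric Bornology Filter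
open scoped ENNReal NNReal

/-- One-sided estimate: every point of the image union over `A ×ˢ C^k` is within
`L * r` of the image union over `A' ×ˢ C'^k`, given pointwise `r`-approximations. -/
lemma stmt9_aux0 {X : Type*} [MetricSpace X] {k n : ℕ}
    (φ : Fin n → X × (Fin k → X) → X) (L : NNReal)
    (hLip : ∀ j, LipschitzWith L (φ j))
    (A A' C C' : Set X) (r : ℝ≥0∞)
    (hA : ∀ x ∈ A, ∃ y ∈ A', edist x y ≤ r)
    (hC : ∀ x ∈ C, ∃ y ∈ C', edist x y ≤ r) :
    ∀ z ∈ ⋃ j, φ j '' (A ×ˢ Set.univ.pi (fun _ : Fin k => C)),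
      EMetric.infEdist z (⋃ j, φ j '' (A' ×ˢ Set.univ.pi (fun _ : Fin k => C'))) ≤ L * r := by
  rintro z hz
  simp only [Set.mem_iUnion, Set.mem_image] at hz
  obtain ⟨j, ⟨x, b⟩, ⟨hx, hb⟩, rfl⟩ := hz
  obtain ⟨y, hy, hxy⟩ := hA x hx
  choose c hc hbc using fun t => hC (b t) (hb t (Set.mem_univ t))
  have hmem : (y, c) ∈ A' ×ˢ Set.univ.pi (fun _ : Fin k => C') :=
    ⟨hy, fun t _ => hc t⟩
  calc EMetric.infEdist (φ j (x, b)) (⋃ j, φ j '' (A' ×ˢ Set.univ.pi (fun _ : Fin k => C')))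
      ≤ edist (φ j (x, b)) (φ j (y, c)) :=
        EMetric.infEdist_le_edist_of_mem
          (Set.mem_iUnion.2 ⟨j, Set.mem_image_of_mem _ hmem⟩)
    _ ≤ L * edist (x, b) (y, c) := (hLip j).edist_le_mul _ _
    _ ≤ L * r := by
        refine mul_le_mul_right ?_ _
        rw [Prod.edist_eq]
        refine max_le hxy ?_
        rw [edist_pi_def]
        exact Finset.sup_le fun t _ => hbc t

/-- The Hausdorff edistance between the image unions is bounded by `L` times the max
of the Hausdorff edistances of the pieces. -/
lemma stmt9_aux {X : Type*} [MetricSpace X] {k n : ℕ}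
    (φ : Fin n → X × (Fin k → X) → X) (L : NNReal)
    (hLip : ∀ j, LipschitzWith L (φ j))
    (A A' C C' : Set X)
    (h1 : EMetric.hausdorffEdist A A' ≠ ⊤) (h2 : EMetric.hausdorffEdist C C' ≠ ⊤) :
    EMetric.hausdorffEdist (⋃ j, φ j '' (A ×ˢ Set.univ.pi (fun _ : Fin k => C)))
      (⋃ j, φ j '' (A' ×ˢ Set.univ.pi (fun _ : Fin k => C')))
      ≤ L * max (EMetric.hausdorffEdist A A') (EMetric.hausdorffEdist C C') := by
  set R := max (EMetric.hausdorffEdist A A') (EMetric.hausdorffEdist C C') with hR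
  have hRne : R ≠ ⊤ := by
    simp only [hR, ne_eq, max_eq_top, not_or]
    exact ⟨h1, h2⟩
  refine ENNReal.le_of_forall_pos_le_add fun ε hε _ => ?_
  -- choose δ with L * δ ≤ ε
  set δ : ℝ≥0∞ := (ε : ℝ≥0∞) / (L + 1) with hδ
  have hδpos : 0 < δ := ENNReal.div_pos (by exact_mod_cast hε.ne') (by
    exact_mod_cast (ENNReal.coe_ne_top (r := L + 1)))
  have hLδ : (L : ℝ≥0∞) * δ ≤ ε := by
    calc (L : ℝ≥0∞) * δ ≤ ((L : ℝ≥0∞) + 1) * δ := by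
          exact mul_le_mul_left (le_add_of_nonneg_right zero_le_one) _
      _ ≤ ε := by
          rw [hδ]
          exact ENNReal.mul_div_le.trans_eq (by push_cast; ring_nf) |>.trans le_rfl
  have hRδ : R < R + δ := ENNReal.lt_add_right hRne hδpos.ne'
  have approx : ∀ (S S' : Set X), EMetric.hausdorffEdist S S' ≤ R →
      ∀ x ∈ S, ∃ y ∈ S', edist x y ≤ R + δ := by
    intro S S' hSS x hx
    have : EMetric.infEdist x S' < R + δ :=
      lt_of_le_of_lt ((EMetric.infEdist_le_hausdorffEdist_of_mem hx).trans hSS) hRδ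
    obtain ⟨y, hy, hxy⟩ := EMetric.infEdist_lt_iff.1 this
    exact ⟨y, hy, hxy.le⟩
  have key := stmt9_aux0 φ L hLip A A' C C' (R + δ)
    (approx A A' (le_max_left _ _))
    (approx C C' (le_max_right _ _))
  have key' := stmt9_aux0 φ L hLip A' A C' C (R + δ)
    (approx A' A (by unfold EMetric.hausdorffEdist; rw [hausdorffEDist_comm]; exact le_max_left _ _))
    (approx C' C (by unfold EMetric.hausdorffEdist; rw [hausdorffEDist_comm]; exact le_max_right _ _))
  have := EMetric.hausdorffEdist_le_of_infEdist key key'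
  calc EMetric.hausdorffEdist _ _ ≤ L * (R + δ) := this
    _ = L * R + L * δ := by ring
    _ ≤ L * R + ε := add_le_add_right hLδ _

/-- Iterating the evaluation map: if `B_{k+1}` is the attractor of the IIFS induced
by `B_k` (i.e. the unique nonempty bounded closed set `A` with
`closure (⋃ j, φ j (A × B_k^{m-1})) = A`), starting from any nonempty bounded closed `B₀`, then
`B_k → A_S` in the Hausdorff-Pompeiu distance, where `A_S` is the attractor of the GIFS.
`X^m` (max metric, `m = k + 1 ≥ 2`) is modelled as `X × (Fin k → X)`. -/
theorem stmt9 {X : Type*} [MetricSpace X] [CompleteSpace X]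
    (k n : ℕ) (hk : 1 ≤ k) (hn : 1 ≤ n)
    (φ : Fin n → X × (Fin k → X) → X)
    (hφ : ∀ j, ∃ L : NNReal, L < 1 ∧ LipschitzWith L (φ j))
    (AS : Set X) (hASne : AS.Nonempty) (hAScp : IsCompact AS)
    (hASfix : (⋃ j, φ j '' (AS ×ˢ Set.univ.pi (fun _ : Fin k => AS))) = AS)
    (B : ℕ → Set X)
    (hB : ∀ i, (B i).Nonempty ∧ IsBounded (B i) ∧ IsClosed (B i))
    (hrec : ∀ i,
      closure (⋃ j, φ j '' (B (i + 1) ×ˢ Set.univ.pi (fun _ : Fin k => B i))) = B (i + 1)) :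
    Tendsto (fun i => hausdorffDist (B i) AS) atTop (nhds 0) := by
  classical
  choose Lf hLf1 hLf using hφ
  set L : NNReal := Finset.univ.sup Lf with hLdef
  have hL1 : L < 1 := by
    rw [hLdef]
    exact Finset.sup_lt_iff (by norm_num) |>.2 fun j _ => hLf1 j
  have hLip : ∀ j, LipschitzWith L (φ j) :=
    fun j => (hLf j).weaken (Finset.le_sup (Finset.mem_univ j))
  -- finiteness of the distances
  have hfin : ∀ i, EMetric.hausdorffEdist (B i) AS ≠ ⊤ := fun i =>
    Metric.hausdorffEdist_ne_top_of_nonempty_of_bounded (hB i).1 hASne (hB i).2.1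
      hAScp.isBounded
  -- key contraction step
  have key : ∀ i, EMetric.hausdorffEdist (B (i + 1)) AS
      ≤ L * EMetric.hausdorffEdist (B i) AS := by
    intro i
    have e1 : EMetric.hausdorffEdist (B (i + 1)) AS
        = EMetric.hausdorffEdist
          (⋃ j, φ j '' (B (i + 1) ×ˢ Set.univ.pi (fun _ : Fin k => B i)))
          (⋃ j, φ j '' (AS ×ˢ Set.univ.pi (fun _ : Fin k => AS))) := by
      conv_lhs => rw [← hrec i, ← hASfix]
      unfold EMetric.hausdorffEdist; rw [hausdorffEDist_closure_left]
    have h := stmt9_aux φ L hLip (B (i + 1)) AS (B i) AS (hfin (i + 1)) (hfin i)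
    rw [← e1] at h
    rcases le_total (EMetric.hausdorffEdist (B (i + 1)) AS)
      (EMetric.hausdorffEdist (B i) AS) with hle | hle
    · rw [max_eq_right hle] at h
      exact h
    · rw [max_eq_left hle] at h
      -- a ≤ L * a with L < 1 forces a = 0
      have ha0 : EMetric.hausdorffEdist (B (i + 1)) AS = 0 := by
        by_contra ha
        have : (L : ℝ≥0∞) * EMetric.hausdorffEdist (B (i + 1)) AS
            < 1 * EMetric.hausdorffEdist (B (i + 1)) AS :=
          ENNReal.mul_lt_mul_left ha (hfin (i + 1)) (by exact_mod_cast hL1)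
        rw [one_mul] at this
        exact absurd h (not_le.2 this)
      rw [ha0]
      exact zero_le
  -- geometric bound
  have geo : ∀ i, EMetric.hausdorffEdist (B i) AS
      ≤ (L : ℝ≥0∞) ^ i * EMetric.hausdorffEdist (B 0) AS := by
    intro i
    induction i with
    | zero => simp
    | succ i ih =>
      calc EMetric.hausdorffEdist (B (i + 1)) AS
          ≤ L * EMetric.hausdorffEdist (B i) AS := key i
        _ ≤ L * ((L : ℝ≥0∞) ^ i * EMetric.hausdorffEdist (B 0) AS) :=
            mul_le_mul_right ih _
        _ = (L : ℝ≥0∞) ^ (i + 1) * EMetric.hausdorffEdist (B 0) AS := by ring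
  -- pass to real distances
  have hreal : ∀ i, hausdorffDist (B i) AS ≤ (L : ℝ) ^ i * hausdorffDist (B 0) AS := by
    intro i
    have hfin2 : (L : ℝ≥0∞) ^ i * EMetric.hausdorffEdist (B 0) AS ≠ ⊤ :=
      ENNReal.mul_ne_top (by simp [ENNReal.pow_ne_top]) (hfin 0)
    have := ENNReal.toReal_mono hfin2 (geo i)
    rwa [ENNReal.toReal_mul, ENNReal.toReal_pow, ENNReal.coe_toReal] at this
  refine squeeze_zero (fun i => hausdorffDist_nonneg) hreal ?_
  have := (tendsto_pow_atTop_nhds_zero_of_lt_one (r := (L : ℝ)) L.coe_nonneg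
    (by exact_mod_cast hL1)).mul_const (hausdorffDist (B 0) AS)
  rwa [zero_mul] at this
end

section
/- Let (X,d) be a compact metric space, m ≥ 1, n ≥ 1, let φ_1, …, φ_n : X^m → X be continuous maps each of which is an (a_1,…,a_m)-contraction with a_i ≥ 0 and Σ_{i=1}^m a_i < 1, and let q_1,…,q_n > 0 with Σ_j q_j = 1. Define the generalized Markov operator M_S on m-tuples of Borel probability measures on X by ∫_X f dM_S(μ_0,…,μ_{m−1}) = Σ_{j=1}^n q_j ∫_{X^m} f∘φ_j d(μ_0 × ⋯ × μ_{m−1}) for every continuous f : X → ℝ. Then for all Borel probability measures μ_0,…,μ_{m−1}, ν_0,…,ν_{m−1} on X, d_MK(M_S(μ_0,…,μ_{m−1}), M_S(ν_0,…,ν_{m−1})) ≤ Σ_{i=1}^m a_i · d_MK(μ_{i−1}, ν_{i−1}), where d_MK is the Monge-Kantorovich distance. -/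
open MeasureTheory Filter

/-- The Monge-Kantorovich distance between two Borel measures: supremum of
`|∫ f dμ - ∫ f dν|` over all 1-Lipschitz functions `f : X → ℝ`. -/
noncomputable def dMK {X : Type*} [MetricSpace X] [MeasurableSpace X]
    (μ ν : Measure X) : ℝ :=
  ⨆ f : {f : X → ℝ // LipschitzWith 1 f}, |∫ x, f.1 x ∂μ - ∫ x, f.1 x ∂ν|

section Aux

lemma contInt {Y : Type*} [TopologicalSpace Y] [CompactSpace Y] [MeasurableSpace Y]
    [OpensMeasurableSpace Y] (ρ : Measure Y) [IsFiniteMeasure ρ] {g : Y → ℝ}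
    (hg : Continuous g) : Integrable g ρ :=
  hg.integrable_of_hasCompactSupport (HasCompactSupport.of_compactSpace g)

variable {X : Type*} [MetricSpace X] [CompactSpace X] [MeasurableSpace X] [BorelSpace X]

lemma dMK_bddAbove (μ ν : Measure X) [IsProbabilityMeasure μ] [IsProbabilityMeasure ν] :
    BddAbove (Set.range fun f : {f : X → ℝ // LipschitzWith 1 f} =>
      |∫ x, f.1 x ∂μ - ∫ x, f.1 x ∂ν|) := by
  have hne : Nonempty X := by
    by_contra h
    rw [not_nonempty_iff] at h
    have : μ Set.univ = 1 := measure_univ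
    simp [Set.univ_eq_empty_iff.2 h] at this
  obtain ⟨x0⟩ := hne
  refine ⟨2 * Metric.diam (Set.univ : Set X), ?_⟩
  rintro r ⟨f, rfl⟩
  have hfc : Continuous f.1 := f.2.continuous
  have key : ∀ (ρ : Measure X) [IsProbabilityMeasure ρ],
      |∫ x, f.1 x ∂ρ - f.1 x0| ≤ Metric.diam (Set.univ : Set X) := by
    intro ρ _
    have h1 : ∫ x, f.1 x ∂ρ - f.1 x0 = ∫ x, (f.1 x - f.1 x0) ∂ρ := by
      rw [integral_sub (contInt ρ hfc) (integrable_const _), integral_const]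
      simp
    rw [h1]
    calc |∫ x, (f.1 x - f.1 x0) ∂ρ| ≤ ∫ x, |f.1 x - f.1 x0| ∂ρ := by
          simpa using norm_integral_le_integral_norm (μ := ρ) (f := fun x => f.1 x - f.1 x0)
      _ ≤ ∫ _x, Metric.diam (Set.univ : Set X) ∂ρ := by
          apply integral_mono (contInt ρ (by fun_prop)).abs (integrable_const _)
          intro x
          have := f.2.dist_le_mul x x0
          simp only [Real.dist_eq, NNReal.coe_one, one_mul] at this
          exact this.trans (Metric.dist_le_diam_of_mem (Metric.isBounded_of_compactSpace)
            (Set.mem_univ x) (Set.mem_univ x0))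
      _ = Metric.diam (Set.univ : Set X) := by simp
  have tri := abs_sub_le (∫ x, f.1 x ∂μ) (f.1 x0) (∫ x, f.1 x ∂ν)
  rw [abs_sub_comm (f.1 x0) (∫ x, f.1 x ∂ν)] at tri
  have k1 := key μ; have k2 := key ν
  linarith

lemma dMK_nonneg (μ ν : Measure X) [IsProbabilityMeasure μ] [IsProbabilityMeasure ν] :
    0 ≤ dMK μ ν := by
  have := le_ciSup (dMK_bddAbove μ ν) ⟨(fun _ => (0:ℝ)), LipschitzWith.const' 0⟩
  simp at this; exact this

lemma abs_integral_sub_le_lip (μ ν : Measure X) [IsProbabilityMeasure μ]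
    [IsProbabilityMeasure ν] {L : ℝ} (hL : 0 ≤ L) {h : X → ℝ}
    (hl : ∀ t s, |h t - h s| ≤ L * dist t s) :
    |∫ x, h x ∂μ - ∫ x, h x ∂ν| ≤ L * dMK μ ν := by
  rcases eq_or_lt_of_le hL with hL0 | hLpos
  · have hne : Nonempty X := by
      by_contra hX
      rw [not_nonempty_iff] at hX
      have h1 : μ Set.univ = 1 := measure_univ
      simp [Set.univ_eq_empty_iff.2 hX] at h1
    obtain ⟨x0⟩ := hne
    have hconst : h = fun _ => h x0 := by
      funext t
      have h1 := hl t x0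
      rw [← hL0, zero_mul] at h1
      have h2 := abs_nonneg (h t - h x0)
      have h3 : |h t - h x0| = 0 := le_antisymm h1 h2
      have h4 := abs_eq_zero.mp h3
      linarith [h4]
    rw [hconst]
    simp [← hL0]
  · set f : X → ℝ := fun x => L⁻¹ * h x with hf
    have hfl : LipschitzWith 1 f := by
      apply LipschitzWith.of_dist_le_mul
      intro x y
      rw [Real.dist_eq]
      simp only [hf, ← mul_sub, abs_mul, abs_inv, abs_of_pos hLpos, NNReal.coe_one, one_mul]
      rw [inv_mul_le_iff₀ hLpos]
      exact hl x y
    have hle : |∫ x, f x ∂μ - ∫ x, f x ∂ν| ≤ dMK μ ν :=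
      le_ciSup (dMK_bddAbove μ ν) (⟨f, hfl⟩ : {f : X → ℝ // LipschitzWith 1 f})
    have : ∫ x, f x ∂μ - ∫ x, f x ∂ν = L⁻¹ * (∫ x, h x ∂μ - ∫ x, h x ∂ν) := by
      simp only [hf, integral_const_mul]; ring
    rw [this, abs_mul, abs_inv, abs_of_pos hLpos] at hle
    calc |∫ x, h x ∂μ - ∫ x, h x ∂ν| = L * (L⁻¹ * |∫ x, h x ∂μ - ∫ x, h x ∂ν|) := by
          field_simp
      _ ≤ L * dMK μ ν := by exact mul_le_mul_of_nonneg_left hle hL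

lemma cont_insertNth {m' : ℕ} (k : Fin (m' + 1)) (t : X) :
    Continuous fun z : Fin m' → X => (k.insertNth t z : Fin (m' + 1) → X) := by
  exact Continuous.finInsertNth (A := fun _ : Fin (m' + 1) => X) k
    (continuous_const : Continuous fun _ : Fin m' → X => t) continuous_id

lemma pi_integral_split {m' : ℕ} (k : Fin (m' + 1)) (τ : Fin (m' + 1) → Measure X)
    [∀ i, IsProbabilityMeasure (τ i)] {g : (Fin (m' + 1) → X) → ℝ} (hg : Continuous g) :
    ∫ y, g y ∂(Measure.pi τ)
      = ∫ t, ∫ z, g (k.insertNth t z) ∂(Measure.pi fun j => τ (k.succAbove j)) ∂(τ k) := by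
  set e := MeasurableEquiv.piFinSuccAbove (fun _ : Fin (m' + 1) => X) k with he
  have hmp := measurePreserving_piFinSuccAbove τ k
  have hsymm : ∀ p : X × (Fin m' → X), e.symm p = k.insertNth p.1 p.2 := by
    intro p
    simp [he, MeasurableEquiv.piFinSuccAbove, Fin.insertNthEquiv]
  have h1 : ∫ y, g y ∂(Measure.pi τ)
      = ∫ p, g (e.symm p) ∂((τ k).prod (Measure.pi fun j => τ (k.succAbove j))) := by
    rw [← hmp.integral_comp e.measurableEmbedding (fun p => g (e.symm p))]
    refine integral_congr_ae (Eventually.of_forall fun y => ?_)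
    show g y = g (e.symm (e y))
    rw [e.symm_apply_apply]
  have hint : Integrable (fun p => g (e.symm p))
      ((τ k).prod (Measure.pi fun j => τ (k.succAbove j))) := by
    rw [← hmp.integrable_comp_emb e.measurableEmbedding]
    have h2 : ((fun p => g (e.symm p)) ∘ e) = g := by
      funext y
      show g (e.symm (e y)) = g y
      rw [e.symm_apply_apply]
    rw [h2]
    exact contInt _ hg
  rw [h1, integral_prod _ hint]
  refine integral_congr_ae (Eventually.of_forall fun t => ?_)
  refine integral_congr_ae (Eventually.of_forall fun z => ?_)
  show g (e.symm (t, z)) = g (k.insertNth t z)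
  rw [hsymm]

lemma step_lemma {m' : ℕ} (k : Fin (m' + 1)) (ρ σ : Fin (m' + 1) → Measure X)
    [∀ i, IsProbabilityMeasure (ρ i)] [∀ i, IsProbabilityMeasure (σ i)]
    (hagree : ∀ i, i ≠ k → ρ i = σ i)
    {g : (Fin (m' + 1) → X) → ℝ} (hg : Continuous g)
    {L : ℝ} (hL : 0 ≤ L)
    (hlip : ∀ u v : Fin (m' + 1) → X, (∀ i, i ≠ k → u i = v i) →
      |g u - g v| ≤ L * dist (u k) (v k)) :
    |∫ y, g y ∂(Measure.pi ρ) - ∫ y, g y ∂(Measure.pi σ)| ≤ L * dMK (ρ k) (σ k) := by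
  set π : Measure (Fin m' → X) := Measure.pi (fun j => ρ (k.succAbove j)) with hπ
  have hπσ : (Measure.pi fun j => σ (k.succAbove j)) = π := by
    rw [hπ]
    congr 1
    funext j
    exact (hagree _ (Fin.succAbove_ne k j)).symm
  have hint : ∀ t : X, Integrable (fun z => g (k.insertNth t z)) π :=
    fun t => contInt π (hg.comp (cont_insertNth k t))
  set H : X → ℝ := fun t => ∫ z, g (k.insertNth t z) ∂π with hH
  have hHlip : ∀ t s, |H t - H s| ≤ L * dist t s := by
    intro t s
    have h1 : H t - H s = ∫ z, (g (k.insertNth t z) - g (k.insertNth s z)) ∂π := by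
      rw [hH]
      exact (integral_sub (hint t) (hint s)).symm
    rw [h1]
    have h2 : ‖∫ z, (g (k.insertNth t z) - g (k.insertNth s z)) ∂π‖
        ≤ ∫ _z, L * dist t s ∂π := by
      apply norm_integral_le_of_norm_le (integrable_const _)
      filter_upwards with z
      rw [Real.norm_eq_abs]
      have h3 := hlip (k.insertNth t z) (k.insertNth s z) ?_
      · simpa [Fin.insertNth_apply_same] using h3
      · intro i hik
        obtain ⟨j, rfl⟩ := Fin.exists_succAbove_eq hik
        simp [Fin.insertNth_apply_succAbove]
    rw [Real.norm_eq_abs] at h2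
    calc |∫ z, (g (k.insertNth t z) - g (k.insertNth s z)) ∂π| ≤ ∫ _z, L * dist t s ∂π := h2
      _ = L * dist t s := by simp
  have hsplit1 := pi_integral_split k ρ hg
  have hsplit2 := pi_integral_split k σ hg
  rw [hπσ] at hsplit2
  rw [hsplit1, hsplit2, ← hπ]
  exact abs_integral_sub_le_lip (ρ k) (σ k) hL hHlip

lemma teleA {m' : ℕ} (μ ν : Fin (m' + 1) → Measure X)
    [∀ i, IsProbabilityMeasure (μ i)] [∀ i, IsProbabilityMeasure (ν i)]
    (a : Fin (m' + 1) → ℝ) (ha : ∀ i, 0 ≤ a i)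
    {g : (Fin (m' + 1) → X) → ℝ} (hg : Continuous g)
    (hlip : ∀ (k : Fin (m' + 1)) (u v : Fin (m' + 1) → X), (∀ i, i ≠ k → u i = v i) →
      |g u - g v| ≤ a k * dist (u k) (v k)) :
    |∫ y, g y ∂(Measure.pi μ) - ∫ y, g y ∂(Measure.pi ν)| ≤ ∑ i, a i * dMK (μ i) (ν i) := by
  have main : ∀ K : ℕ, K ≤ m' + 1 →
      |∫ y, g y ∂(Measure.pi μ)
        - ∫ y, g y ∂(Measure.pi (fun i : Fin (m' + 1) => if (i : ℕ) < K then ν i else μ i))|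
      ≤ ∑ i ∈ Finset.univ.filter (fun i : Fin (m' + 1) => (i : ℕ) < K),
          a i * dMK (μ i) (ν i) := by
    intro K
    induction K with
    | zero =>
      intro _
      simp
    | succ K ih =>
      intro hK
      have hK' : K < m' + 1 := hK
      haveI inst1 : ∀ i : Fin (m' + 1),
          IsProbabilityMeasure (if (i : ℕ) < K then ν i else μ i) := by
        intro i; split <;> infer_instance
      haveI inst2 : ∀ i : Fin (m' + 1),
          IsProbabilityMeasure (if (i : ℕ) < K + 1 then ν i else μ i) := by
        intro i; split <;> infer_instance
      have hstep := step_lemma (⟨K, hK'⟩ : Fin (m' + 1))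
        (fun i : Fin (m' + 1) => if (i : ℕ) < K then ν i else μ i)
        (fun i : Fin (m' + 1) => if (i : ℕ) < K + 1 then ν i else μ i)
        (by
          intro i hik
          have hne : (i : ℕ) ≠ K := fun h => hik (Fin.ext h)
          show (if (i : ℕ) < K then ν i else μ i) = (if (i : ℕ) < K + 1 then ν i else μ i)
          rcases lt_or_ge (i : ℕ) K with h | h
          · rw [if_pos h, if_pos (by omega)]
          · rw [if_neg (by omega), if_neg (by omega)])
        hg (ha ⟨K, hK'⟩)
        (hlip ⟨K, hK'⟩)
      simp only [if_neg (lt_irrefl K), if_pos (Nat.lt_succ_self K)] at hstep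
      have hsum : Finset.univ.filter (fun i : Fin (m' + 1) => (i : ℕ) < K + 1)
          = insert (⟨K, hK'⟩ : Fin (m' + 1))
              (Finset.univ.filter (fun i : Fin (m' + 1) => (i : ℕ) < K)) := by
        ext i
        simp only [Finset.mem_filter, Finset.mem_insert, Finset.mem_univ, true_and,
          Fin.ext_iff]
        omega
      rw [hsum, Finset.sum_insert (by simp)]
      have ihh := ih (by omega)
      have tri := abs_sub_le (∫ y, g y ∂(Measure.pi μ))
        (∫ y, g y ∂(Measure.pi (fun i : Fin (m' + 1) => if (i : ℕ) < K then ν i else μ i)))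
        (∫ y, g y ∂(Measure.pi (fun i : Fin (m' + 1) => if (i : ℕ) < K + 1 then ν i else μ i)))
      linarith
  have hfin := main (m' + 1) (le_refl _)
  have h1 : (fun i : Fin (m' + 1) => if (i : ℕ) < m' + 1 then ν i else μ i) = ν := by
    funext i
    simp [i.isLt]
  have h2 : Finset.univ.filter (fun i : Fin (m' + 1) => (i : ℕ) < m' + 1) = Finset.univ := by
    ext i
    simp [i.isLt]
    omega
  rw [h1, h2] at hfin
  exact hfin

end Aux

/-- The generalized Markov operator of a GIFS with probabilities consisting of
`(a_1, …, a_m)`-contractions is an `(a_1, …, a_m)`-contraction for the Monge-Kantorovich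
distance.  `M_S(μ_0, …, μ_{m-1})` is characterized by the defining integral identity. -/
theorem stmt10 {X : Type*} [MetricSpace X] [CompactSpace X] [MeasurableSpace X] [BorelSpace X]
    (m n : ℕ) (hm : 1 ≤ m) (hn : 1 ≤ n)
    (φ : Fin n → (Fin m → X) → X) (hφc : ∀ j, Continuous (φ j))
    (a : Fin m → ℝ) (ha : ∀ i, 0 ≤ a i) (hsum : ∑ i, a i < 1)
    (hcontr : ∀ j (x y : Fin m → X),
      dist (φ j x) (φ j y) ≤ ∑ i, a i * dist (x i) (y i))
    (q : Fin n → ℝ) (hq : ∀ j, 0 < q j) (hq1 : ∑ j, q j = 1)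
    (μ ν : Fin m → Measure X)
    [∀ i, IsProbabilityMeasure (μ i)] [∀ i, IsProbabilityMeasure (ν i)]
    (Mμ Mν : Measure X) [IsProbabilityMeasure Mμ] [IsProbabilityMeasure Mν]
    (hMμ : ∀ f : X → ℝ, Continuous f →
      ∫ x, f x ∂Mμ = ∑ j, q j * ∫ y, f (φ j y) ∂(Measure.pi μ))
    (hMν : ∀ f : X → ℝ, Continuous f →
      ∫ x, f x ∂Mν = ∑ j, q j * ∫ y, f (φ j y) ∂(Measure.pi ν)) :
    dMK Mμ Mν ≤ ∑ i, a i * dMK (μ i) (ν i) := by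
  obtain ⟨m', rfl⟩ : ∃ m', m = m' + 1 := ⟨m - 1, by omega⟩
  have hnon : Nonempty {f : X → ℝ // LipschitzWith 1 f} :=
    ⟨⟨fun _ => (0 : ℝ), LipschitzWith.const' 0⟩⟩
  apply ciSup_le
  intro f
  rw [hMμ f.1 f.2.continuous, hMν f.1 f.2.continuous, ← Finset.sum_sub_distrib]
  have key : ∀ j : Fin n,
      |∫ y, f.1 (φ j y) ∂(Measure.pi μ) - ∫ y, f.1 (φ j y) ∂(Measure.pi ν)|
        ≤ ∑ i, a i * dMK (μ i) (ν i) := by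
    intro j
    refine teleA μ ν a ha (g := fun y => f.1 (φ j y))
      (f.2.continuous.comp (hφc j)) ?_
    intro k u v hagree
    have h1 : |f.1 (φ j u) - f.1 (φ j v)| ≤ dist (φ j u) (φ j v) := by
      have := f.2.dist_le_mul (φ j u) (φ j v)
      simpa [Real.dist_eq] using this
    have h2 := hcontr j u v
    have h3 : ∑ i, a i * dist (u i) (v i) = a k * dist (u k) (v k) := by
      apply Finset.sum_eq_single
      · intro i _ hik
        rw [hagree i hik]
        simp
      · simp
    show |f.1 (φ j u) - f.1 (φ j v)| ≤ a k * dist (u k) (v k)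
    linarith
  calc |∑ j, (q j * ∫ y, f.1 (φ j y) ∂(Measure.pi μ) - q j * ∫ y, f.1 (φ j y) ∂(Measure.pi ν))|
      ≤ ∑ j, |q j * ∫ y, f.1 (φ j y) ∂(Measure.pi μ)
          - q j * ∫ y, f.1 (φ j y) ∂(Measure.pi ν)| := Finset.abs_sum_le_sum_abs _ _
    _ = ∑ j, q j * |∫ y, f.1 (φ j y) ∂(Measure.pi μ)
          - ∫ y, f.1 (φ j y) ∂(Measure.pi ν)| := by
        apply Finset.sum_congr rfl
        intro j _
        rw [← mul_sub, abs_mul, abs_of_pos (hq j)]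
    _ ≤ ∑ j, q j * ∑ i, a i * dMK (μ i) (ν i) := by
        apply Finset.sum_le_sum
        intro j _
        exact mul_le_mul_of_nonneg_left (key j) (hq j).le
    _ = ∑ i, a i * dMK (μ i) (ν i) := by
        rw [← Finset.sum_mul, hq1, one_mul]
end

section
/- Let (X,d) be a compact metric space, let φ_1, …, φ_n : X² → X be continuous maps each of which is an (a_1,a_2)-contraction with a_1, a_2 ≥ 0 and a_1 + a_2 < 1, and let q_1,…,q_n > 0 with Σ_j q_j = 1. Let ν, ν' be Borel probability measures on X, and suppose μ and μ' are Borel probability measures on X satisfying, for every continuous f : X → ℝ, ∫_X f dμ = ∫_X ∫_X Σ_j q_j f(φ_j(x,b)) dν(b) dμ(x) and ∫_X f dμ' = ∫_X ∫_X Σ_j q_j f(φ_j(x,b)) dν'(b) dμ'(x) (i.e. μ and μ' are fixed points of the Markov operators of the IIFS with probabilities induced by ν and ν' respectively). Then d_MK(μ, μ') ≤ (a_2/(1 − a_1)) · d_MK(ν, ν'). -/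
/-!
For a 1-Lipschitz `f`, the fixed-point equations turn `∫ f dμ - ∫ f dμ'` into
`∫∫ F dν dμ - ∫∫ F dν' dμ'` with `F x b = ∑ j, q j * f (φ j (x, b))`, which is `a₁`-Lipschitz
in `x` and `a₂`-Lipschitz in `b`. Replacing `μ` by `μ'` costs at most `a₁ · d_MK(μ, μ')`, and
then replacing `ν` by `ν'` at most `a₂ · d_MK(ν, ν')`. Hence
`d_MK(μ, μ') ≤ a₁ · d_MK(μ, μ') + a₂ · d_MK(ν, ν')`, and `a₁ < 1` lets us solve for `d_MK(μ, μ')`.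
-/

open MeasureTheory Filter

open scoped NNReal

lemma abs_sum_mul_sub_sum_mul_le {ι : Type*} [Fintype ι] {q u v : ι → ℝ} (hq : ∀ j, 0 ≤ q j)
    (hq1 : ∑ j, q j = 1) {C : ℝ} (h : ∀ j, |u j - v j| ≤ C) :
    |∑ j, q j * u j - ∑ j, q j * v j| ≤ C :=
  calc |∑ j, q j * u j - ∑ j, q j * v j|
      = |∑ j, q j * (u j - v j)| := by simp only [mul_sub, Finset.sum_sub_distrib]
    _ ≤ ∑ j, |q j * (u j - v j)| := Finset.abs_sum_le_sum_abs _ _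
    _ ≤ ∑ j, q j * C := Finset.sum_le_sum fun j _ => by
        rw [abs_mul, abs_of_nonneg (hq j)]
        exact mul_le_mul_of_nonneg_left (h j) (hq j)
    _ = C := by rw [← Finset.sum_mul, hq1, one_mul]

section ProbabilityMeasure

variable {Ω : Type*} [MeasurableSpace Ω] (κ : Measure Ω) [IsProbabilityMeasure κ]

lemma abs_integral_sub_integral_le {f g : Ω → ℝ} (hf : Integrable f κ) (hg : Integrable g κ)
    {C : ℝ} (h : ∀ x, |f x - g x| ≤ C) : |∫ x, f x ∂κ - ∫ x, g x ∂κ| ≤ C := by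
  rw [← integral_sub hf hg]
  simpa using norm_integral_le_of_norm_le_const (μ := κ) (f := fun x => f x - g x)
    (Eventually.of_forall h)

lemma abs_integral_sub_const_le {f : Ω → ℝ} (hf : Integrable f κ) {c C : ℝ}
    (h : ∀ x, |f x - c| ≤ C) : |∫ x, f x ∂κ - c| ≤ C := by
  simpa using abs_integral_sub_integral_le κ hf (integrable_const c) h

lemma lipschitzWith_integral {X : Type*} [PseudoMetricSpace X] {K : ℝ≥0} {F : X → Ω → ℝ}
    (hint : ∀ x, Integrable (F x) κ) (hF : ∀ b, LipschitzWith K (F · b)) :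
    LipschitzWith K fun x => ∫ b, F x b ∂κ :=
  .of_dist_le_mul fun x x' => by
    rw [Real.dist_eq]
    exact abs_integral_sub_integral_le κ (hint x) (hint x') fun b => by
      simpa [Real.dist_eq] using (hF b).dist_le_mul x x'

end ProbabilityMeasure

section MongeKantorovich

variable {X : Type*} [MetricSpace X] [MeasurableSpace X]

lemma dMK_le {μ ν : Measure X} {C : ℝ}
    (h : ∀ f : X → ℝ, LipschitzWith 1 f → |∫ x, f x ∂μ - ∫ x, f x ∂ν| ≤ C) : dMK μ ν ≤ C :=
  have : Nonempty {f : X → ℝ // LipschitzWith 1 f} :=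
    ⟨⟨fun _ => 0, (LipschitzWith.const 0).weaken zero_le_one⟩⟩
  ciSup_le fun f => h f.1 f.2

variable [CompactSpace X] [BorelSpace X]

lemma LipschitzWith.integrable {K : ℝ≥0} {f : X → ℝ} (hf : LipschitzWith K f) (μ : Measure X)
    [IsFiniteMeasure μ] : Integrable f μ :=
  hf.continuous.integrable_of_hasCompactSupport (.of_compactSpace f)

variable (μ ν : Measure X) [IsProbabilityMeasure μ] [IsProbabilityMeasure ν]

lemma LipschitzWith.abs_integral_sub_integral_le_two_mul_diam {f : X → ℝ}
    (hf : LipschitzWith 1 f) :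
    |∫ x, f x ∂μ - ∫ x, f x ∂ν| ≤ 2 * Metric.diam (Set.univ : Set X) := by
  obtain ⟨x₀⟩ := nonempty_of_isProbabilityMeasure μ
  have hbound : ∀ x, |f x - f x₀| ≤ Metric.diam (Set.univ : Set X) := fun x =>
    calc |f x - f x₀| = dist (f x) (f x₀) := (Real.dist_eq _ _).symm
      _ ≤ dist x x₀ := by simpa using hf.dist_le_mul x x₀
      _ ≤ _ := Metric.dist_le_diam_of_mem isCompact_univ.isBounded trivial trivial
  have hμ := abs_integral_sub_const_le μ (hf.integrable μ) hbound
  have hν := abs_integral_sub_const_le ν (hf.integrable ν) hbound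
  calc |∫ x, f x ∂μ - ∫ x, f x ∂ν|
      ≤ |∫ x, f x ∂μ - f x₀| + |f x₀ - ∫ x, f x ∂ν| := abs_sub_le _ _ _
    _ ≤ _ := by rw [abs_sub_comm (f x₀)]; linarith

lemma LipschitzWith.abs_integral_sub_integral_le_dMK {f : X → ℝ} (hf : LipschitzWith 1 f) :
    |∫ x, f x ∂μ - ∫ x, f x ∂ν| ≤ dMK μ ν :=
  le_ciSup (f := fun f : {f : X → ℝ // LipschitzWith 1 f} => |∫ x, f.1 x ∂μ - ∫ x, f.1 x ∂ν|)
    ⟨2 * Metric.diam (Set.univ : Set X), by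
      rintro _ ⟨g, rfl⟩
      exact g.2.abs_integral_sub_integral_le_two_mul_diam μ ν⟩ ⟨f, hf⟩

lemma LipschitzWith.abs_integral_sub_integral_le_mul_dMK {K : ℝ≥0} {f : X → ℝ}
    (hf : LipschitzWith K f) : |∫ x, f x ∂μ - ∫ x, f x ∂ν| ≤ K * dMK μ ν := by
  obtain ⟨x₀⟩ := nonempty_of_isProbabilityMeasure μ
  rcases eq_or_ne K 0 with rfl | hK
  · have hconst : f = fun _ => f x₀ := funext fun x => dist_le_zero.mp (by
      simpa using hf.dist_le_mul x x₀)
    rw [hconst]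
    simp
  · have hKpos : (0 : ℝ) < K := by positivity
    have hscaled : LipschitzWith 1 fun x => (K : ℝ)⁻¹ * f x :=
      .of_dist_le_mul fun x y => by
        rw [Real.dist_eq, ← mul_sub, abs_mul, abs_inv, abs_of_pos hKpos, NNReal.coe_one, one_mul,
          inv_mul_le_iff₀ hKpos, ← Real.dist_eq]
        exact hf.dist_le_mul x y
    have := hscaled.abs_integral_sub_integral_le_dMK μ ν
    rwa [integral_const_mul, integral_const_mul, ← mul_sub, abs_mul, abs_inv, abs_of_pos hKpos,
      inv_mul_le_iff₀ hKpos] at this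

end MongeKantorovich

lemma abs_integral_integral_sub_le
    {X Y : Type*} [MetricSpace X] [CompactSpace X] [MeasurableSpace X] [BorelSpace X]
    [MetricSpace Y] [CompactSpace Y] [MeasurableSpace Y] [BorelSpace Y]
    {F : X → Y → ℝ} {a₁ a₂ : ℝ} (ha₁ : 0 ≤ a₁) (ha₂ : 0 ≤ a₂)
    (hF : ∀ x x' b b', |F x b - F x' b'| ≤ a₁ * dist x x' + a₂ * dist b b')
    (μ μ' : Measure X) [IsProbabilityMeasure μ] [IsProbabilityMeasure μ']
    (ν ν' : Measure Y) [IsProbabilityMeasure ν] [IsProbabilityMeasure ν'] :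
    |∫ x, ∫ b, F x b ∂ν ∂μ - ∫ x, ∫ b, F x b ∂ν' ∂μ'| ≤ a₁ * dMK μ μ' + a₂ * dMK ν ν' := by
  have hLipY : ∀ x, LipschitzWith a₂.toNNReal (F x) := fun x =>
    .of_dist_le_mul fun b b' => by simpa [Real.dist_eq, ha₂] using hF x x b b'
  have hLipX : ∀ b, LipschitzWith a₁.toNNReal (F · b) := fun b =>
    .of_dist_le_mul fun x x' => by simpa [Real.dist_eq, ha₁] using hF x x' b b
  have hAvg : ∀ (κ : Measure Y) [IsProbabilityMeasure κ],
      LipschitzWith a₁.toNNReal fun x => ∫ b, F x b ∂κ := fun κ _ =>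
    lipschitzWith_integral κ (fun x => (hLipY x).integrable κ) hLipX
  have hμ : |∫ x, ∫ b, F x b ∂ν ∂μ - ∫ x, ∫ b, F x b ∂ν ∂μ'| ≤ a₁ * dMK μ μ' := by
    simpa [ha₁] using (hAvg ν).abs_integral_sub_integral_le_mul_dMK μ μ'
  have hν : |∫ x, ∫ b, F x b ∂ν ∂μ' - ∫ x, ∫ b, F x b ∂ν' ∂μ'| ≤ a₂ * dMK ν ν' :=
    abs_integral_sub_integral_le μ' ((hAvg ν).integrable μ') ((hAvg ν').integrable μ') fun x => by
      simpa [ha₂] using (hLipY x).abs_integral_sub_integral_le_mul_dMK ν ν'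
  calc _ ≤ |∫ x, ∫ b, F x b ∂ν ∂μ - ∫ x, ∫ b, F x b ∂ν ∂μ'|
        + |∫ x, ∫ b, F x b ∂ν ∂μ' - ∫ x, ∫ b, F x b ∂ν' ∂μ'| := abs_sub_le _ _ _
    _ ≤ _ := add_le_add hμ hν

theorem stmt16_general {X : Type*} [MetricSpace X] [CompactSpace X] [MeasurableSpace X] [BorelSpace X]
    (n : ℕ)
    (φ : Fin n → X × X → X)
    (a₁ a₂ : ℝ) (ha₁ : 0 ≤ a₁) (ha₂ : 0 ≤ a₂) (hsum : a₁ + a₂ < 1)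
    (hcontr : ∀ j (x x' y y' : X),
      dist (φ j (x, y)) (φ j (x', y')) ≤ a₁ * dist x x' + a₂ * dist y y')
    (q : Fin n → ℝ) (hq : ∀ j, 0 < q j) (hq1 : ∑ j, q j = 1)
    (ν ν' μ μ' : Measure X)
    [IsProbabilityMeasure ν] [IsProbabilityMeasure ν']
    [IsProbabilityMeasure μ] [IsProbabilityMeasure μ']
    (hμ : ∀ f : X → ℝ, Continuous f →
      ∫ x, f x ∂μ = ∫ x, (∫ b, (∑ j, q j * f (φ j (x, b))) ∂ν) ∂μ)
    (hμ' : ∀ f : X → ℝ, Continuous f →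
      ∫ x, f x ∂μ' = ∫ x, (∫ b, (∑ j, q j * f (φ j (x, b))) ∂ν') ∂μ') :
    dMK μ μ' ≤ a₂ / (1 - a₁) * dMK ν ν' := by
  have hstep : dMK μ μ' ≤ a₁ * dMK μ μ' + a₂ * dMK ν ν' := dMK_le fun f hf => by
    have hf₁ : ∀ y y', dist (f y) (f y') ≤ dist y y' := fun y y' => by
      simpa using hf.dist_le_mul y y'
    rw [hμ f hf.continuous, hμ' f hf.continuous]
    refine abs_integral_integral_sub_le ha₁ ha₂ (fun x x' b b' => ?_) μ μ' ν ν'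
    refine abs_sum_mul_sub_sum_mul_le (fun j => (hq j).le) hq1 fun j => ?_
    rw [← Real.dist_eq]
    exact (hf₁ _ _).trans (hcontr j x x' b b')
  rw [div_mul_eq_mul_div, le_div_iff₀ (by linarith)]
  linarith

/-- For a GIFSp of order 2 consisting of `(a_1, a_2)`-contractions with
`a_1 + a_2 < 1` on a compact metric space, if `μ` and `μ'` are fixed points of the Markov
operators of the IIFSp induced by `ν` and `ν'` respectively, then
`d_MK(μ, μ') ≤ (a_2 / (1 - a_1)) · d_MK(ν, ν')`. -/
theorem stmt16 {X : Type*} [MetricSpace X] [CompactSpace X] [MeasurableSpace X] [BorelSpace X]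
    (n : ℕ) (hn : 1 ≤ n)
    (φ : Fin n → X × X → X) (hφc : ∀ j, Continuous (φ j))
    (a₁ a₂ : ℝ) (ha₁ : 0 ≤ a₁) (ha₂ : 0 ≤ a₂) (hsum : a₁ + a₂ < 1)
    (hcontr : ∀ j (x x' y y' : X),
      dist (φ j (x, y)) (φ j (x', y')) ≤ a₁ * dist x x' + a₂ * dist y y')
    (q : Fin n → ℝ) (hq : ∀ j, 0 < q j) (hq1 : ∑ j, q j = 1)
    (ν ν' μ μ' : Measure X)
    [IsProbabilityMeasure ν] [IsProbabilityMeasure ν']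
    [IsProbabilityMeasure μ] [IsProbabilityMeasure μ']
    (hμ : ∀ f : X → ℝ, Continuous f →
      ∫ x, f x ∂μ = ∫ x, (∫ b, (∑ j, q j * f (φ j (x, b))) ∂ν) ∂μ)
    (hμ' : ∀ f : X → ℝ, Continuous f →
      ∫ x, f x ∂μ' = ∫ x, (∫ b, (∑ j, q j * f (φ j (x, b))) ∂ν') ∂μ') :
    dMK μ μ' ≤ a₂ / (1 - a₁) * dMK ν ν' :=
  stmt16_general n φ a₁ a₂ ha₁ ha₂ hsum hcontr q hq hq1 ν ν' μ μ' hμ hμ'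
end

section
/- (Ostrowski's theorem on stability of successive approximations.) Let (X,d) be a complete metric space and T : X → X a map satisfying d(Tx, Ty) ≤ α · d(x,y) for some α ∈ [0,1) and all x, y ∈ X; let p be the unique fixed point of T. Let (ε_k)_{k≥1} be a sequence of nonnegative real numbers and (y_k)_{k≥0} a sequence in X with y_0 = x_0 and d(y_k, T y_{k−1}) ≤ ε_k for all k ≥ 1. Then for every k ∈ ℕ, d(y_k, p) ≤ (α^k/(1−α)) · d(x_0, T x_0) + Σ_{i=1}^k α^{k−i} ε_i. In particular, if ε_k → 0 then y_k → p. -/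
/-!
Put `dₖ = d(yₖ, p)`. The triangle inequality through `T yₖ₋₁` and `T p = p` give the linear
recursive inequality `dₖ ≤ α dₖ₋₁ + εₖ`; unrolling it yields the estimate, once
`d₀ = d(x₀, p) ≤ d(x₀, T x₀) / (1 - α)` is used. Convergence also comes from the recursion: if
`εₖ < (1 - α) δ / 2` from some index `N` on, then `dₖ - δ / 2` decays geometrically after `N`.
-/

open Filter Finset Topology

section LinearRecursiveInequality

variable {α : ℝ} {d e : ℕ → ℝ}

lemma le_pow_mul_add_sum_of_le_mul_add (hα : 0 ≤ α) (h : ∀ n, d (n + 1) ≤ α * d n + e n)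
    (n : ℕ) : d n ≤ α ^ n * d 0 + ∑ l ∈ range n, α ^ (n - 1 - l) * e l := by
  induction n with
  | zero => simp
  | succ n ih =>
    have hsum : ∑ l ∈ range (n + 1), α ^ (n + 1 - 1 - l) * e l
        = α * ∑ l ∈ range n, α ^ (n - 1 - l) * e l + e n := by
      rw [sum_range_succ, mul_sum, Nat.add_sub_cancel, Nat.sub_self, pow_zero, one_mul]
      congr 1
      refine sum_congr rfl fun l hl => ?_
      rw [← mul_assoc, ← pow_succ', Nat.sub_right_comm, Nat.sub_add_cancel]
      exact Nat.le_sub_of_add_le' (mem_range.1 hl)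
    calc d (n + 1) ≤ α * d n + e n := h n
      _ ≤ α * (α ^ n * d 0 + ∑ l ∈ range n, α ^ (n - 1 - l) * e l) + e n := by gcongr
      _ = _ := by rw [hsum, pow_succ']; ring

lemma le_pow_mul_of_le_mul (hα : 0 ≤ α) (h : ∀ n, d (n + 1) ≤ α * d n) (n : ℕ) :
    d n ≤ α ^ n * d 0 := by
  simpa using le_pow_mul_add_sum_of_le_mul_add (e := 0) hα (by simpa using h) n

lemma tendsto_zero_of_le_mul_add (hα0 : 0 ≤ α) (hα1 : α < 1) (hd : ∀ n, 0 ≤ d n)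
    (h : ∀ n, d (n + 1) ≤ α * d n + e n) (he : Tendsto e atTop (𝓝 0)) :
    Tendsto d atTop (𝓝 0) := by
  refine tendsto_order.2 ⟨fun a ha => .of_forall fun n => ha.trans_le (hd n), fun δ hδ => ?_⟩
  obtain ⟨N, hN⟩ := eventually_atTop.1 <|
    (tendsto_order.1 he).2 ((1 - α) * δ / 2) (by nlinarith)
  set u : ℕ → ℝ := fun m => d (N + m) - δ / 2
  have hu : ∀ m, u m ≤ α ^ m * u 0 := le_pow_mul_of_le_mul hα0 fun m => by
    have := hN (N + m) (Nat.le_add_right N m)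
    have := h (N + m)
    simp only [u, ← add_assoc]
    linarith
  obtain ⟨M, hM⟩ := eventually_atTop.1 <|
    (tendsto_order.1 ((tendsto_pow_atTop_nhds_zero_of_lt_one hα0 hα1).mul_const (u 0))).2
      (δ / 2) (by simpa using half_pos hδ)
  refine eventually_atTop.2 ⟨N + M, fun n hn => ?_⟩
  obtain ⟨m, rfl⟩ := Nat.exists_eq_add_of_le (le_of_add_le_left hn)
  have hum : d (N + m) - δ / 2 ≤ α ^ m * u 0 := hu m
  linarith [hM m (by omega)]

end LinearRecursiveInequality

theorem stmt18_general {X : Type*} [MetricSpace X]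
    (T : X → X) (α : ℝ) (hα0 : 0 ≤ α) (hα1 : α < 1)
    (hT : ∀ x y : X, dist (T x) (T y) ≤ α * dist x y)
    (p : X) (hp : T p = p)
    (x₀ : X) (y : ℕ → X) (ε : ℕ → ℝ)
    (hy0 : y 0 = x₀)
    (hyk : ∀ i : ℕ, dist (y (i + 1)) (T (y i)) ≤ ε (i + 1)) :
    (∀ i : ℕ, dist (y i) p ≤
      α ^ i / (1 - α) * dist x₀ (T x₀) +
        ∑ l ∈ Finset.range i, α ^ (i - 1 - l) * ε (l + 1)) ∧
    (Tendsto ε atTop (nhds 0) → Tendsto y atTop (nhds p)) := by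
  have hrec : ∀ n, dist (y (n + 1)) p ≤ α * dist (y n) p + ε (n + 1) := fun n =>
    calc dist (y (n + 1)) p ≤ dist (y (n + 1)) (T (y n)) + dist (T (y n)) (T p) :=
          by rw [hp]; exact dist_triangle _ _ _
      _ ≤ ε (n + 1) + α * dist (y n) p := add_le_add (hyk n) (hT _ _)
      _ = _ := add_comm _ _
  have hT' : ContractingWith ⟨α, hα0⟩ T :=
    ⟨(NNReal.coe_lt_coe (r₁ := ⟨α, hα0⟩) (r₂ := 1)).1 hα1, LipschitzWith.of_dist_le_mul hT⟩
  have hx₀ : dist x₀ p ≤ dist x₀ (T x₀) / (1 - α) := hT'.dist_le_of_fixedPoint x₀ hp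
  refine ⟨fun i => ?_, fun hε => ?_⟩
  · calc dist (y i) p ≤ α ^ i * dist (y 0) p + ∑ l ∈ range i, α ^ (i - 1 - l) * ε (l + 1) :=
          le_pow_mul_add_sum_of_le_mul_add (d := fun n => dist (y n) p) hα0 hrec i
      _ ≤ α ^ i * (dist x₀ (T x₀) / (1 - α)) + _ := by rw [hy0]; gcongr
      _ = _ := by ring
  · exact tendsto_iff_dist_tendsto_zero.2 <| tendsto_zero_of_le_mul_add hα0 hα1
      (fun _ => dist_nonneg) hrec (hε.comp (tendsto_add_atTop_nat 1))

/-- Ostrowski: stability of successive approximations for a Banach contraction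
`T` with factor `α ∈ [0, 1)` and unique fixed point `p`: if `y_0 = x_0` and
`d(y_k, T y_{k-1}) ≤ ε_k` for `k ≥ 1`, then
`d(y_k, p) ≤ (α^k / (1 - α)) d(x_0, T x_0) + ∑_{i=1}^{k} α^{k-i} ε_i`, and in particular
`y_k → p` whenever `ε_k → 0`. -/
theorem stmt18 {X : Type*} [MetricSpace X] [CompleteSpace X]
    (T : X → X) (α : ℝ) (hα0 : 0 ≤ α) (hα1 : α < 1)
    (hT : ∀ x y : X, dist (T x) (T y) ≤ α * dist x y)
    (p : X) (hp : T p = p)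
    (x₀ : X) (y : ℕ → X) (ε : ℕ → ℝ) (hε : ∀ i, 0 ≤ ε i)
    (hy0 : y 0 = x₀)
    (hyk : ∀ i : ℕ, dist (y (i + 1)) (T (y i)) ≤ ε (i + 1)) :
    (∀ i : ℕ, dist (y i) p ≤
      α ^ i / (1 - α) * dist x₀ (T x₀) +
        ∑ l ∈ Finset.range i, α ^ (i - 1 - l) * ε (l + 1)) ∧
    (Tendsto ε atTop (nhds 0) → Tendsto y atTop (nhds p)) :=
  stmt18_general T α hα0 hα1 hT p hp x₀ y ε hy0 hyk
end

section
/- Let (X,d) be a complete metric space, m ≥ 2, n ≥ 1, and let φ_1, …, φ_n : X^m → X each be Lipschitz with respect to the max metric on X^m, with L := max_j Lip(φ_j) < 1. Let A_S be the attractor of the GIFS and, for a nonempty bounded closed set B ⊆ X, let ev(B) denote the attractor of the IIFS induced by B (the unique nonempty bounded closed set A with closure(∪_j φ_j(A × B^{m−1})) = A). Let (β_k)_{k≥1} and (σ_k)_{k≥1} be sequences of positive reals converging to 0, and let (B_k)_{k≥0} and (B'_k)_{k≥1} be sequences of nonempty bounded closed subsets of X such that for every k ≥ 1: h(B_{k−1},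 B'_k) < β_k and h(B_k, ev(B'_k)) < σ_k. Then h(B_k, ev(B_{k−1})) ≤ L·β_k + σ_k for every k ≥ 1, and consequently B_k converges to A_S in the Hausdorff-Pompeiu distance. -/
open Metric Bornology Filter

section Aux

variable {X : Type*} [MetricSpace X]

/-- One-sided approximation for the key Hausdorff estimate. -/
lemma key_onesided {k n : ℕ} (φ : Fin n → X × (Fin k → X) → X) (L : NNReal)
    (hφ : ∀ j, LipschitzWith L (φ j)) (A A' C C' : Set X)
    (hAA' : EMetric.hausdorffEdist A A' ≠ ⊤) (hCC' : EMetric.hausdorffEdist C C' ≠ ⊤)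
    {δ : ℝ} (hδ : 0 < δ) :
    ∀ x ∈ ⋃ j, φ j '' (A ×ˢ Set.univ.pi fun _ : Fin k => C),
      ∃ y ∈ ⋃ j, φ j '' (A' ×ˢ Set.univ.pi fun _ : Fin k => C'),
        dist x y ≤ (L : ℝ) * max (hausdorffDist A A') (hausdorffDist C C') + δ := by
  intro x hx
  simp only [Set.mem_iUnion, Set.mem_image] at hx
  obtain ⟨j, p, hp, rfl⟩ := hx
  rw [Set.mem_prod] at hp
  have hp1 : p.1 ∈ A := hp.1
  have hp2 : ∀ i, p.2 i ∈ C := fun i => hp.2 i (Set.mem_univ i)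
  set δ' : ℝ := δ / ((L : ℝ) + 1) with hδ'def
  have hLpos : (0:ℝ) < (L : ℝ) + 1 := by positivity
  have hδ' : 0 < δ' := div_pos hδ hLpos
  obtain ⟨a', ha'mem, ha'lt⟩ := exists_dist_lt_of_hausdorffDist_lt hp1
    (lt_add_of_pos_right _ hδ') hAA'
  have hbex : ∀ i : Fin k, ∃ c' ∈ C', dist (p.2 i) c' < hausdorffDist C C' + δ' :=
    fun i => exists_dist_lt_of_hausdorffDist_lt (hp2 i) (lt_add_of_pos_right _ hδ') hCC'
  choose b' hb'mem hb'lt using hbex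
  refine ⟨φ j (a', b'), ?_, ?_⟩
  · simp only [Set.mem_iUnion, Set.mem_image]
    exact ⟨j, (a', b'), Set.mem_prod.2 ⟨ha'mem, fun i _ => hb'mem i⟩, rfl⟩
  · have hdp : dist p (a', b') ≤ max (hausdorffDist A A') (hausdorffDist C C') + δ' := by
      rw [Prod.dist_eq]
      refine max_le ?_ ?_
      · exact le_trans ha'lt.le (add_le_add_left (le_max_left _ _) _)
      · have hpi : dist p.2 b' ≤ hausdorffDist C C' + δ' :=
          (dist_pi_le_iff (add_nonneg hausdorffDist_nonneg hδ'.le)).2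
            fun i => (hb'lt i).le
        exact le_trans hpi (add_le_add_left (le_max_right _ _) _)
    calc dist (φ j p) (φ j (a', b')) ≤ (L : ℝ) * dist p (a', b') := (hφ j).dist_le_mul _ _
      _ ≤ (L : ℝ) * (max (hausdorffDist A A') (hausdorffDist C C') + δ') := by
          exact mul_le_mul_of_nonneg_left hdp L.coe_nonneg
      _ = (L : ℝ) * max (hausdorffDist A A') (hausdorffDist C C') + (L : ℝ) * δ' := by ring
      _ ≤ (L : ℝ) * max (hausdorffDist A A') (hausdorffDist C C') + δ := by
          refine add_le_add_right ?_ _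
          rw [hδ'def]
          rw [mul_div_assoc'] at *
          rw [div_le_iff₀ hLpos]
          nlinarith [L.coe_nonneg, hδ.le]

/-- The key estimate: the Hausdorff distance between the "Hutchinson images" is bounded
by `L` times the max of the Hausdorff distances of the inputs. -/
lemma key_est {k n : ℕ} (φ : Fin n → X × (Fin k → X) → X) (L : NNReal)
    (hφ : ∀ j, LipschitzWith L (φ j)) (A A' C C' : Set X)
    (hAA' : EMetric.hausdorffEdist A A' ≠ ⊤) (hCC' : EMetric.hausdorffEdist C C' ≠ ⊤) :
    hausdorffDist (⋃ j, φ j '' (A ×ˢ Set.univ.pi fun _ : Fin k => C))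
      (⋃ j, φ j '' (A' ×ˢ Set.univ.pi fun _ : Fin k => C')) ≤
    (L : ℝ) * max (hausdorffDist A A') (hausdorffDist C C') := by
  refine le_of_forall_pos_le_add fun δ hδ => ?_
  have hmax : (0:ℝ) ≤ max (hausdorffDist A A') (hausdorffDist C C') :=
    le_trans hausdorffDist_nonneg (le_max_left _ _)
  refine hausdorffDist_le_of_mem_dist (add_nonneg (mul_nonneg L.coe_nonneg hmax) hδ.le)
    (key_onesided φ L hφ A A' C C' hAA' hCC' hδ) ?_
  intro y hy
  obtain ⟨x, hx, hxy⟩ := key_onesided φ L hφ A' A C' C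
    (by unfold EMetric.hausdorffEdist at hAA' ⊢; rwa [hausdorffEDist_comm]) (by unfold EMetric.hausdorffEdist at hCC' ⊢; rwa [hausdorffEDist_comm]) hδ y hy
  refine ⟨x, hx, ?_⟩
  rw [hausdorffDist_comm (s := A') (t := A), hausdorffDist_comm (s := C') (t := C),
    dist_comm] at hxy
  rwa [dist_comm y x]

/-- If `a (n+1) ≤ L * a n + ε (n+1)` with `0 ≤ a`, `0 ≤ L < 1` and `ε → 0`, then `a → 0`. -/
lemma tendsto_zero_of_rec {L : ℝ} (hL0 : 0 ≤ L) (hL : L < 1) {a ε : ℕ → ℝ}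
    (ha0 : ∀ i, 0 ≤ a i) (hrec : ∀ i, a (i + 1) ≤ L * a i + ε (i + 1))
    (hε : Tendsto ε atTop (nhds 0)) : Tendsto a atTop (nhds 0) := by
  rw [Metric.tendsto_atTop]
  intro δ hδ
  have h1L : 0 < 1 - L := by linarith
  obtain ⟨N, hN⟩ := (Metric.tendsto_atTop.1 hε) ((1 - L) * δ / 2) (by positivity)
  have hεN : ∀ i ≥ N, ε i ≤ (1 - L) * δ / 2 := by
    intro i hi
    have := hN i hi
    rw [Real.dist_eq, sub_zero] at this
    exact (le_abs_self _).trans this.le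
  have key : ∀ p : ℕ, a (N + p) ≤ L ^ p * a N + δ / 2 := by
    intro p
    induction p with
    | zero =>
      simp only [pow_zero, one_mul, Nat.add_zero]
      linarith [ha0 N]
    | succ p ih =>
      have h1 : a (N + p + 1) ≤ L * a (N + p) + ε (N + p + 1) := hrec (N + p)
      have h2 : ε (N + p + 1) ≤ (1 - L) * δ / 2 := hεN _ (by omega)
      have h3 : L * a (N + p) ≤ L * (L ^ p * a N + δ / 2) :=
        mul_le_mul_of_nonneg_left ih hL0
      have : a (N + p + 1) ≤ L * (L ^ p * a N + δ / 2) + (1 - L) * δ / 2 := by linarith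
      calc a (N + (p + 1)) = a (N + p + 1) := by ring_nf
      _ ≤ L * (L ^ p * a N + δ / 2) + (1 - L) * δ / 2 := this
      _ = L ^ (p + 1) * a N + δ / 2 := by ring
  -- `L ^ p * a N → 0`
  have hpow : Tendsto (fun p => L ^ p * a N) atTop (nhds 0) := by
    simpa using (tendsto_pow_atTop_nhds_zero_of_lt_one hL0 hL).mul_const (a N)
  obtain ⟨P, hP⟩ := (Metric.tendsto_atTop.1 hpow) (δ / 2) (by positivity)
  refine ⟨N + P, fun i hi => ?_⟩
  obtain ⟨p, rfl⟩ := Nat.exists_eq_add_of_le (le_trans (Nat.le_add_right N P) hi)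
  have hi' : a (N + p) ≤ L ^ p * a N + δ / 2 := key p
  have hpow' : L ^ p * a N < δ / 2 := by
    have := hP p (by omega)
    rw [Real.dist_eq, sub_zero] at this
    exact (le_abs_self _).trans_lt this
  rw [Real.dist_eq, sub_zero, abs_of_nonneg (ha0 _)]
  linarith

end Aux

/-- the approximate iteration algorithm.  `ev B` denotes the attractor of the
IIFS induced by a nonempty bounded closed set `B` from a GIFS of order `m = k + 1 ≥ 2` whose
maps `φ_j` are `L`-Lipschitz with `L < 1` (`X^m`, with max metric, is modelled as
`X × (Fin k → X)`), and `A_S` is the attractor of the GIFS.  If `h(B_{k-1}, B'_k) < β_k` and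
`h(B_k, ev B'_k) < σ_k` with `β_k, σ_k > 0` and `β_k, σ_k → 0`, then
`h(B_k, ev B_{k-1}) ≤ L β_k + σ_k` for all `k ≥ 1`, and `B_k → A_S` in the Hausdorff-Pompeiu
distance. -/
theorem stmt19 {X : Type*} [MetricSpace X] [CompleteSpace X]
    (k n : ℕ) (hk : 1 ≤ k) (hn : 1 ≤ n)
    (φ : Fin n → X × (Fin k → X) → X) (L : NNReal) (hL : L < 1)
    (hφ : ∀ j, LipschitzWith L (φ j))
    (AS : Set X) (hASne : AS.Nonempty) (hAScp : IsCompact AS)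
    (hASfix : (⋃ j, φ j '' (AS ×ˢ Set.univ.pi fun _ : Fin k => AS)) = AS)
    (ev : Set X → Set X)
    (hev : ∀ B : Set X, B.Nonempty → IsBounded B → IsClosed B →
      (ev B).Nonempty ∧ IsBounded (ev B) ∧ IsClosed (ev B) ∧
        closure (⋃ j, φ j '' (ev B ×ˢ Set.univ.pi fun _ : Fin k => B)) = ev B)
    (β σ : ℕ → ℝ) (hβpos : ∀ i, 0 < β (i + 1)) (hσpos : ∀ i, 0 < σ (i + 1))
    (hβ0 : Tendsto β atTop (nhds 0)) (hσ0 : Tendsto σ atTop (nhds 0))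
    (B B' : ℕ → Set X)
    (hB : ∀ i, (B i).Nonempty ∧ IsBounded (B i) ∧ IsClosed (B i))
    (hB' : ∀ i, (B' (i + 1)).Nonempty ∧ IsBounded (B' (i + 1)) ∧ IsClosed (B' (i + 1)))
    (h1 : ∀ i, hausdorffDist (B i) (B' (i + 1)) < β (i + 1))
    (h2 : ∀ i, hausdorffDist (B (i + 1)) (ev (B' (i + 1))) < σ (i + 1)) :
    (∀ i, hausdorffDist (B (i + 1)) (ev (B i)) ≤ (L : ℝ) * β (i + 1) + σ (i + 1)) ∧
    Tendsto (fun i => hausdorffDist (B i) AS) atTop (nhds 0) := by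
  have hLR : (0:ℝ) ≤ (L : ℝ) := L.coe_nonneg
  have hASbd : IsBounded AS := hAScp.isBounded
  -- finiteness of Hausdorff edistances between nonempty bounded sets
  have hfin : ∀ S T : Set X, S.Nonempty → IsBounded S → T.Nonempty → IsBounded T →
      EMetric.hausdorffEdist S T ≠ ⊤ := fun S T hS hSb hT hTb =>
    hausdorffEdist_ne_top_of_nonempty_of_bounded hS hT hSb hTb
  -- ev is L-Lipschitz (comparing with any nice set via the fixed point equation);
  -- we prove the two instances we need.
  have evprop : ∀ C : Set X, C.Nonempty → IsBounded C → IsClosed C →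
      (ev C).Nonempty ∧ IsBounded (ev C) ∧ IsClosed (ev C) ∧
        closure (⋃ j, φ j '' (ev C ×ˢ Set.univ.pi fun _ : Fin k => C)) = ev C := hev
  -- generic Lipschitz-type estimate: for nice C₁ C₂, h(ev C₁, ev C₂) ≤ L h(C₁, C₂)
  have evlip : ∀ C₁ C₂ : Set X, C₁.Nonempty → IsBounded C₁ → IsClosed C₁ →
      C₂.Nonempty → IsBounded C₂ → IsClosed C₂ →
      hausdorffDist (ev C₁) (ev C₂) ≤ (L : ℝ) * hausdorffDist C₁ C₂ := by
    intro C₁ C₂ h1n h1b h1c h2n h2b h2c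
    obtain ⟨e1n, e1b, e1c, e1fix⟩ := evprop C₁ h1n h1b h1c
    obtain ⟨e2n, e2b, e2c, e2fix⟩ := evprop C₂ h2n h2b h2c
    have hest := key_est φ L hφ (ev C₁) (ev C₂) C₁ C₂
      (hfin _ _ e1n e1b e2n e2b) (hfin _ _ h1n h1b h2n h2b)
    have heq : hausdorffDist (ev C₁) (ev C₂) =
        hausdorffDist (⋃ j, φ j '' (ev C₁ ×ˢ Set.univ.pi fun _ : Fin k => C₁))
          (⋃ j, φ j '' (ev C₂ ×ˢ Set.univ.pi fun _ : Fin k => C₂)) := by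
      conv_lhs => rw [← e1fix, ← e2fix]
      exact hausdorffDist_closure
    rw [← heq] at hest
    rcases le_total (hausdorffDist (ev C₁) (ev C₂)) (hausdorffDist C₁ C₂) with hle | hle
    · rwa [max_eq_right hle] at hest
    · rw [max_eq_left hle] at hest
      have h0 : hausdorffDist (ev C₁) (ev C₂) ≤ 0 := by nlinarith [NNReal.coe_lt_one.2 hL, hausdorffDist_nonneg (s := ev C₁) (t := ev C₂)]
      have := hausdorffDist_nonneg (s := C₁) (t := C₂)
      nlinarith
  -- h(ev C, AS) ≤ L * h(C, AS) for nice C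
  have evAS : ∀ C : Set X, C.Nonempty → IsBounded C → IsClosed C →
      hausdorffDist (ev C) AS ≤ (L : ℝ) * hausdorffDist C AS := by
    intro C hCn hCb hCc
    obtain ⟨en, eb, ec, efix⟩ := evprop C hCn hCb hCc
    have hest := key_est φ L hφ (ev C) AS C AS
      (hfin _ _ en eb hASne hASbd) (hfin _ _ hCn hCb hASne hASbd)
    rw [hASfix] at hest
    have heq : hausdorffDist (ev C) AS =
        hausdorffDist (⋃ j, φ j '' (ev C ×ˢ Set.univ.pi fun _ : Fin k => C)) AS := by
      conv_lhs => rw [← efix]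
      exact hausdorffDist_closure₁
    rw [← heq] at hest
    rcases le_total (hausdorffDist (ev C) AS) (hausdorffDist C AS) with hle | hle
    · rwa [max_eq_right hle] at hest
    · rw [max_eq_left hle] at hest
      have h0 : hausdorffDist (ev C) AS ≤ 0 := by nlinarith [NNReal.coe_lt_one.2 hL, hausdorffDist_nonneg (s := ev C) (t := AS)]
      have := hausdorffDist_nonneg (s := C) (t := AS)
      nlinarith
  -- part 1
  have part1 : ∀ i, hausdorffDist (B (i + 1)) (ev (B i)) ≤ (L : ℝ) * β (i + 1) + σ (i + 1) := by
    intro i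
    obtain ⟨hBn, hBb, hBc⟩ := hB i
    obtain ⟨hB1n, hB1b, hB1c⟩ := hB (i + 1)
    obtain ⟨hB'n, hB'b, hB'c⟩ := hB' i
    obtain ⟨e'n, e'b, e'c, _⟩ := evprop _ hB'n hB'b hB'c
    have htri : hausdorffDist (B (i + 1)) (ev (B i)) ≤
        hausdorffDist (B (i + 1)) (ev (B' (i + 1))) +
        hausdorffDist (ev (B' (i + 1))) (ev (B i)) :=
      hausdorffDist_triangle (hfin _ _ hB1n hB1b e'n e'b)
    have hlip : hausdorffDist (ev (B' (i + 1))) (ev (B i)) ≤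
        (L : ℝ) * hausdorffDist (B' (i + 1)) (B i) :=
      evlip _ _ hB'n hB'b hB'c hBn hBb hBc
    have hcomm : hausdorffDist (B' (i + 1)) (B i) = hausdorffDist (B i) (B' (i + 1)) :=
      hausdorffDist_comm
    have h1i := h1 i
    have h2i := h2 i
    have : (L : ℝ) * hausdorffDist (B' (i + 1)) (B i) ≤ (L : ℝ) * β (i + 1) := by
      rw [hcomm]; exact mul_le_mul_of_nonneg_left h1i.le hLR
    linarith
  refine ⟨part1, ?_⟩
  -- part 2
  have hrec : ∀ i, hausdorffDist (B (i + 1)) AS ≤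
      (L : ℝ) * hausdorffDist (B i) AS + ((L : ℝ) * β (i + 1) + σ (i + 1)) := by
    intro i
    obtain ⟨hBn, hBb, hBc⟩ := hB i
    obtain ⟨hB1n, hB1b, hB1c⟩ := hB (i + 1)
    obtain ⟨en, eb, ec, _⟩ := evprop _ hBn hBb hBc
    have htri : hausdorffDist (B (i + 1)) AS ≤
        hausdorffDist (B (i + 1)) (ev (B i)) + hausdorffDist (ev (B i)) AS :=
      hausdorffDist_triangle (hfin _ _ hB1n hB1b en eb)
    have := evAS _ hBn hBb hBc
    have := part1 i
    linarith
  have hε : Tendsto (fun i => (L : ℝ) * β i + σ i) atTop (nhds 0) := by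
    have := (hβ0.const_mul (L : ℝ)).add hσ0
    simpa using this
  exact tendsto_zero_of_rec hLR (NNReal.coe_lt_one.2 hL)
    (fun i => hausdorffDist_nonneg) hrec hε
end
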